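/- Practical quasi-stability via comparison: Under the hypotheses of the practical stability theorem (with a, b ∈ 𝒦, b(D_∞(u,0̃)) ≤ V(t,u) ≤ a(D_∞(u,0̃)), and the comparison estimate V(t, u(t)) ≤ r(t, t₀, V(t₀, u₀))), if the scalar comparison system is practically quasi-stable — i.e., 0 ≤ r₀ < a(λ) implies r(t, t₀, r₀) < b(B) for all t ≥ t₀ + T₀ in 𝕋 — then the hybrid fuzzy system is practically quasi-stable: D_∞(u₀, 0̃) < λ implies D_∞(u(t), 0̃) < B for all t ≥ t₀ + T₀ in 𝕋. -/

import Mathlib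

theorem practical_quasi_stability_via_comparison_general
    {F : Type*} [MetricSpace F]
    (T : Set ℝ) (z : F) (u : ℝ → F) (V : ℝ → F → ℝ)
    (t₀ : ℝ) (ht₀ : t₀ ∈ T)
    (l B T₀ : ℝ) (hB : 0 < B) (hT₀ : 0 < T₀)
    -- R t t₀ r₀ : the maximal solution of the scalar comparison hybrid system
    (R : ℝ → ℝ → ℝ → ℝ)
    -- class-𝒦 functions a, b and the two-sided bound on V:
    (a b : ℝ → ℝ)
    (hamono : StrictMonoOn a (Set.Ici 0))
    (ha0 : a 0 = 0)
    (hbmono : StrictMonoOn b (Set.Ici 0))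
    (hbound : ∀ t ∈ T, b (dist (u t) z) ≤ V t (u t) ∧
        V t (u t) ≤ a (dist (u t) z))
    -- the hybrid comparison estimate (assumed, as allowed):
    (hcomp : ∀ r₀ : ℝ, V t₀ (u t₀) ≤ r₀ →
        ∀ t ∈ T, t₀ ≤ t → V t (u t) ≤ R t t₀ r₀)
    -- practical quasi-stability of the scalar comparison system:
    (hscalar : ∀ r₀ : ℝ, 0 ≤ r₀ → r₀ < a l →
        ∀ t ∈ T, t₀ + T₀ ≤ t → R t t₀ r₀ < b B) :
    dist (u t₀) z < l → ∀ t ∈ T, t₀ + T₀ ≤ t → dist (u t) z < B := by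
  intro hdist t ht hge
  have hd₀ : 0 ≤ dist (u t₀) z := dist_nonneg
  have hr₀ : 0 ≤ a (dist (u t₀) z) := ha0 ▸ hamono.monotoneOn Set.self_mem_Ici hd₀ hd₀
  have hr₀l : a (dist (u t₀) z) < a l := hamono hd₀ (hd₀.trans hdist.le) hdist
  have hVt : b (dist (u t) z) < b B := calc
    b (dist (u t) z) ≤ V t (u t) := (hbound t ht).1
    _ ≤ R t t₀ (a (dist (u t₀) z)) := hcomp _ (hbound t₀ ht₀).2 t ht (by linarith)
    _ < b B := hscalar _ hr₀ hr₀l t ht hge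
  exact (hbmono.lt_iff_lt dist_nonneg hB.le).1 hVt

/-- practical quasi-stability via comparison: under the
two-sided class-𝒦 bounds `b(D_∞(u,0̃)) ≤ V(t,u) ≤ a(D_∞(u,0̃))` and the
comparison estimate `V(t,u(t)) ≤ r(t,t₀,r₀)` whenever `V(t₀,u₀) ≤ r₀`, if the
scalar comparison system is practically quasi-stable — `0 ≤ r₀ < a(λ)` implies
`r(t,t₀,r₀) < b(B)` for all `t ≥ t₀ + T₀` in `T` — then the hybrid fuzzy
system is practically quasi-stable: `D_∞(u₀,0̃) < λ` implies
`D_∞(u(t),0̃) < B` for all `t ≥ t₀ + T₀` in `T`. -/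
theorem practical_quasi_stability_via_comparison
    {F : Type*} [MetricSpace F]
    (T : Set ℝ) (z : F) (u : ℝ → F) (V : ℝ → F → ℝ)
    (t₀ : ℝ) (ht₀ : t₀ ∈ T)
    (l B T₀ : ℝ) (hl : 0 < l) (hB : 0 < B) (hT₀ : 0 < T₀)
    (hT₀T : t₀ + T₀ ∈ T)
    -- R t t₀ r₀ : the maximal solution of the scalar comparison hybrid system
    (R : ℝ → ℝ → ℝ → ℝ)
    -- class-𝒦 functions a, b and the two-sided bound on V:
    (a b : ℝ → ℝ)
    (hacont : ContinuousOn a (Set.Ici 0)) (hamono : StrictMonoOn a (Set.Ici 0))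
    (ha0 : a 0 = 0)
    (hbcont : ContinuousOn b (Set.Ici 0)) (hbmono : StrictMonoOn b (Set.Ici 0))
    (hb0 : b 0 = 0)
    (hbound : ∀ t ∈ T, b (dist (u t) z) ≤ V t (u t) ∧
        V t (u t) ≤ a (dist (u t) z))
    -- the hybrid comparison estimate (assumed, as allowed):
    (hcomp : ∀ r₀ : ℝ, V t₀ (u t₀) ≤ r₀ →
        ∀ t ∈ T, t₀ ≤ t → V t (u t) ≤ R t t₀ r₀)
    -- practical quasi-stability of the scalar comparison system:
    (hscalar : ∀ r₀ : ℝ, 0 ≤ r₀ → r₀ < a l →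
        ∀ t ∈ T, t₀ + T₀ ≤ t → R t t₀ r₀ < b B) :
    dist (u t₀) z < l → ∀ t ∈ T, t₀ + T₀ ≤ t → dist (u t) z < B :=
  practical_quasi_stability_via_comparison_general T z u V t₀ ht₀ l B T₀ hB hT₀ R a b hamono ha0
    hbmono hbound hcomp hscalar
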